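/- arXiv:1010.2187 — 2 statements merged into one kernel-verified Lean document; each statement's English description precedes it below -/
import Mathlib

section
/- Let K be a field of characteristic 0, let n be odd, and let N be the n×n nilpotent single Jordan block over K, i.e., the matrix whose (i,j) entry (1-indexed) is 1 if j = i+1 and 0 otherwise. Then for every symmetric n×n matrix A over K satisfying N·A + A·Nᵀ = 0, one has det(A) ≠ 0 if and only if the (1,n) entry of A is nonzero. -/
/-!
Entrywise, `N A + A Nᵀ = 0` says `A (i+1) j = -A i (j+1)`, where entries outside the matrix are
read as `0`. Hence `A i j = (-1)^i A 0 (i+j)`, which vanishes for `i + j ≥ n`: `A` is triangular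
with respect to the antidiagonal, whose entries are `±A 0 (n-1)`, so `det A = ±(A 0 (n-1))^n`.
-/

open Matrix

/-- The `n × n` nilpotent single Jordan block. -/
def singleJordan (K : Type*) [Field K] (n : ℕ) : Matrix (Fin n) (Fin n) K :=
  Matrix.of fun i j => if (j : ℕ) = (i : ℕ) + 1 then 1 else 0

lemma eq_neg_one_pow_mul_of_succ_left_eq_neg {R : Type*} [Ring R] {f : ℕ → ℕ → R}
    (hf : ∀ i j, f (i + 1) j = -f i (j + 1)) (i j : ℕ) : f i j = (-1) ^ i * f 0 (i + j) := by
  induction i generalizing j with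
  | zero => simp
  | succ i ih => rw [hf, ih, pow_succ, show i + (j + 1) = i + 1 + j by omega]; noncomm_ring

namespace Matrix

variable {R : Type*} {n : ℕ}

def natEntry [Zero R] (A : Matrix (Fin n) (Fin n) R) (i j : ℕ) : R :=
  if h : i < n ∧ j < n then A ⟨i, h.1⟩ ⟨j, h.2⟩ else 0

@[simp]
lemma natEntry_fin [Zero R] (A : Matrix (Fin n) (Fin n) R) (i j : Fin n) :
    A.natEntry i j = A i j := by
  simp [natEntry]

lemma natEntry_transpose [Zero R] (A : Matrix (Fin n) (Fin n) R) (i j : ℕ) :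
    Aᵀ.natEntry i j = A.natEntry j i := by
  simp [natEntry, and_comm]

lemma natEntry_of_le_left [Zero R] (A : Matrix (Fin n) (Fin n) R) {i : ℕ} (hi : n ≤ i)
    (j : ℕ) :
    A.natEntry i j = 0 := by
  simp [natEntry, hi.not_gt]

lemma natEntry_of_le_right [Zero R] (A : Matrix (Fin n) (Fin n) R) (i : ℕ) {j : ℕ}
    (hj : n ≤ j) :
    A.natEntry i j = 0 := by
  simp [natEntry, hj.not_gt]

lemma det_eq_sign_revPerm_mul_prod_antidiagonal [CommRing R] (A : Matrix (Fin n) (Fin n) R)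
    (hA : ∀ i j : Fin n, n ≤ (i : ℕ) + j → A i j = 0) :
    A.det = Equiv.Perm.sign (Fin.revPerm : Equiv.Perm (Fin n)) * ∏ i, A i i.rev := by
  have hupper : (A.submatrix id Fin.revPerm).IsUpperTriangular := by
    intro i j hji
    have hlt : (j : ℕ) < i := hji
    exact hA _ _ (by simp only [id_eq, Fin.revPerm_apply, Fin.val_rev]; omega)
  have hdet := det_permute' Fin.revPerm A
  rw [det_of_isUpperTriangular hupper] at hdet
  simp only [submatrix_apply, id_eq, Fin.revPerm_apply] at hdet
  rw [hdet, ← mul_assoc, ← Int.cast_mul, ← Units.val_mul, Int.units_mul_self, Units.val_one,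
    Int.cast_one, one_mul]

end Matrix

section singleJordan

variable {K : Type*} [Field K] {n : ℕ}

lemma singleJordan_mul_apply (A : Matrix (Fin n) (Fin n) K) (i j : Fin n) :
    (singleJordan K n * A) i j = A.natEntry (i + 1) j := by
  by_cases hi : (i : ℕ) + 1 < n
  · have hk (k : Fin n) : (k : ℕ) = i + 1 ↔ k = ⟨i + 1, hi⟩ := by simp [Fin.ext_iff]
    simp [singleJordan, mul_apply, hk, natEntry, hi]
  · have hk (k : Fin n) : (k : ℕ) ≠ i + 1 := by omega
    simp [singleJordan, mul_apply, hk, natEntry, hi]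

lemma mul_singleJordan_transpose_apply (A : Matrix (Fin n) (Fin n) K) (i j : Fin n) :
    (A * (singleJordan K n)ᵀ) i j = A.natEntry i (j + 1) := by
  rw [← transpose_transpose (A * _), transpose_mul, transpose_apply, transpose_transpose,
    singleJordan_mul_apply, natEntry_transpose]

lemma natEntry_succ_left_of_singleJordan {A : Matrix (Fin n) (Fin n) K}
    (hfix : singleJordan K n * A + A * (singleJordan K n)ᵀ = 0) (i j : ℕ) :
    A.natEntry (i + 1) j = -A.natEntry i (j + 1) := by
  by_cases h : i < n ∧ j < n
  · have hij := congrFun (congrFun hfix ⟨i, h.1⟩) ⟨j, h.2⟩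
    rw [Matrix.add_apply, singleJordan_mul_apply, mul_singleJordan_transpose_apply,
      Matrix.zero_apply] at hij
    exact eq_neg_of_add_eq_zero_left hij
  · rcases not_and_or.mp h with hi | hj
    · rw [natEntry_of_le_left A (by omega), natEntry_of_le_left A (by omega), neg_zero]
    · rw [natEntry_of_le_right A _ (by omega), natEntry_of_le_right A _ (by omega), neg_zero]

end singleJordan

theorem singleJordan_odd_det_ne_zero_iff_general (K : Type*) [Field K] (n : ℕ)
    (hn : Odd n) (A : Matrix (Fin n) (Fin n) K)
    (hfix : singleJordan K n * A + A * (singleJordan K n)ᵀ = 0) :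
    A.det ≠ 0 ↔ A ⟨0, hn.pos⟩ ⟨n - 1, Nat.sub_lt hn.pos Nat.one_pos⟩ ≠ 0 := by
  set a := A ⟨0, hn.pos⟩ ⟨n - 1, Nat.sub_lt hn.pos Nat.one_pos⟩
  have hentry := eq_neg_one_pow_mul_of_succ_left_eq_neg (natEntry_succ_left_of_singleJordan hfix)
  have hzero : ∀ i j : Fin n, n ≤ (i : ℕ) + j → A i j = 0 := fun i j h => by
    rw [← natEntry_fin A i j, hentry, natEntry_of_le_right _ _ h, mul_zero]
  have hanti : ∀ i : Fin n, A i i.rev = (-1) ^ (i : ℕ) * a := fun i => by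
    rw [← natEntry_fin A i i.rev, hentry, Fin.val_rev,
      show (i : ℕ) + (n - (i + 1)) = n - 1 by omega]
    simp [natEntry, hn.pos, a]
  have hsign : ((Equiv.Perm.sign (Fin.revPerm : Equiv.Perm (Fin n)) : ℤ) : K) ≠ 0 :=
    ((Equiv.Perm.sign _).isUnit.map (Int.castRingHom K)).ne_zero
  have : NeZero n := ⟨hn.pos.ne'⟩
  rw [det_eq_sign_revPerm_mul_prod_antidiagonal A hzero, mul_ne_zero_iff_left hsign,
    Finset.prod_ne_zero_iff]
  simp [hanti]

/-- When `n` is odd, a symmetric matrix fixed by the regular unipotent element is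
nondegenerate iff its `(1, n)` entry (1-indexed) is nonzero. -/
theorem singleJordan_odd_det_ne_zero_iff (K : Type*) [Field K] [CharZero K] (n : ℕ)
    (hn : Odd n) (A : Matrix (Fin n) (Fin n) K) (hA : A.IsSymm)
    (hfix : singleJordan K n * A + A * (singleJordan K n)ᵀ = 0) :
    A.det ≠ 0 ↔ A ⟨0, hn.pos⟩ ⟨n - 1, Nat.sub_lt hn.pos Nat.one_pos⟩ ≠ 0 :=
  singleJordan_odd_det_ne_zero_iff_general K n hn A hfix
end

section
/- Every symmetric n×n matrix A over K satisfying N_λ·A + A·N_λᵀ = 0 has rank(A) ≤ n − d(λ). -/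
open Matrix

/-- Partial sum `s_r = λ_1 + ⋯ + λ_{r-1}` (where the parts are `lam 0, lam 1, …`). -/
def psum {k : ℕ} (lam : Fin k → ℕ) (r : Fin k) : ℕ :=
  ∑ t ∈ Finset.univ.filter (fun t => t < r), lam t

/-- The `n × n` nilpotent Jordan matrix of type `λ`: its 1-indexed `(i, j)` entry is `1`
if `j = i + 1` and `s_r < i < i + 1 ≤ s_r + λ_r` for some `r`, and `0` otherwise
(here written with 0-indexed `i`, `j`). -/
def jordanNilpotent (K : Type*) [Field K] (n k : ℕ) (lam : Fin k → ℕ) :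
    Matrix (Fin n) (Fin n) K :=
  Matrix.of fun i j =>
    if (j : ℕ) = (i : ℕ) + 1 ∧
        ∃ r : Fin k, psum lam r ≤ (i : ℕ) ∧ (i : ℕ) + 2 ≤ psum lam r + lam r
      then 1 else 0

theorem psum_add_lt {n k : ℕ} (lam : Fin k → ℕ) (hn : ∑ r, lam r = n) (r : Fin k)
    (p : ℕ) (hp : p < lam r) : psum lam r + p < n := by
  have h1 : lam r + psum lam r ≤ ∑ t, lam t := by
    rw [psum, ← Finset.sum_insert (by simp)]
    exact Finset.sum_le_sum_of_subset (Finset.subset_univ _)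
  omega

/-- The index in `Fin n` of the `p`-th position (0-indexed) of the `r`-th block. -/
def blockIdx {n k : ℕ} (lam : Fin k → ℕ) (hn : ∑ r, lam r = n) (r : Fin k) (p : ℕ)
    (hp : p < lam r) : Fin n :=
  ⟨psum lam r + p, psum_add_lt lam hn r p hp⟩

/-- The degeneracy number `d(λ)`: the number of even integers occurring as a part of `λ`
with odd multiplicity. -/
def degeneracy {k : ℕ} (lam : Fin k → ℕ) : ℕ :=
  ((Finset.univ.image lam).filter fun m =>
    Even m ∧ Odd ((Finset.univ.filter fun r => lam r = m)).card).card

/-!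
Write `N = N_λ`. Since `N A = -(A Nᵀ)` and `A` is symmetric, `N ^ j * A` is skew-symmetric for odd
`j`, so its rank is even. The Frobenius rank inequality for `N`, `N ^ j`, `A` shows that
`f j = rank (N ^ j) - rank (N ^ j * A)` is antitone. As `rank (N ^ j) = ∑ r, (λ_r - j)`, the
difference `rank (N ^ t) - rank (N ^ (t + 2))` has the parity of the multiplicity of `t + 1` in `λ`;
when this is odd and `t` is odd, `f t - f (t + 2)` is an odd number minus an even one, so
`f (t + 2) < f t`. So `f` drops once for every even part `t + 1` of odd multiplicity, and
`d(λ) ≤ f 0 = n - rank A`.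
-/

theorem Submodule.finrank_map_add_finrank_inf_ker {K V W : Type*} [DivisionRing K]
    [AddCommGroup V] [Module K V] [FiniteDimensional K V] [AddCommGroup W] [Module K W]
    (f : V →ₗ[K] W) (p : Submodule K V) :
    Module.finrank K (p.map f) + Module.finrank K ↥(p ⊓ LinearMap.ker f) = Module.finrank K p := by
  have h := LinearMap.finrank_range_add_finrank_ker (f.domRestrict p)
  rwa [LinearMap.range_domRestrict, LinearMap.ker_domRestrict, ← top_inf_eq (Submodule.comap _ _),
    ← Submodule.comap_subtype_self p, ← Submodule.comap_inf,
    (Submodule.comapSubtypeEquivOfLe inf_le_left).finrank_eq] at h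

namespace Matrix

variable {K : Type*} [Field K] {l m n o : Type*} [Fintype m] [Fintype n] [Fintype o]

theorem rank_mul_add_rank_mul_le (A : Matrix l m K) (B : Matrix m n K) (C : Matrix n o K) :
    (A * B).rank + (B * C).rank ≤ (A * B * C).rank + B.rank := by
  have hle : LinearMap.range (B * C).mulVecLin ≤ LinearMap.range B.mulVecLin := by
    rw [mulVecLin_mul]; exact LinearMap.range_comp_le_range _ _
  have hB := Submodule.finrank_map_add_finrank_inf_ker A.mulVecLin (LinearMap.range B.mulVecLin)
  have hBC := Submodule.finrank_map_add_finrank_inf_ker A.mulVecLin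
    (LinearMap.range (B * C).mulVecLin)
  have hker := Submodule.finrank_mono (inf_le_inf_right (LinearMap.ker A.mulVecLin) hle)
  rw [rank, rank, rank, rank, Matrix.mul_assoc, mulVecLin_mul A (B * C), mulVecLin_mul A B,
    LinearMap.range_comp, LinearMap.range_comp]
  omega

theorem antitone_rank_pow_sub_rank_pow_mul [DecidableEq m] (N : Matrix m m K) (A : Matrix m o K) :
    Antitone fun j => (N ^ j).rank - (N ^ j * A).rank := by
  refine antitone_nat_of_succ_le fun j => ?_
  have h := rank_mul_add_rank_mul_le N (N ^ j) A
  rw [← pow_succ'] at h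
  have := rank_mul_le_left (N ^ j) A
  have := rank_mul_le_left (N ^ (j + 1)) A
  omega

theorem rank_submatrix_le_rank_submatrix_of_transpose_eq_neg {κ : Type*} [Fintype κ]
    {B : Matrix m m K} (hB : Bᵀ = -B) {a : κ → m}
    (ha : Submodule.span K (Set.range (B.row ∘ a)) = Submodule.span K (Set.range B.row)) :
    (B.submatrix a id).rank ≤ (B.submatrix a a).rank := by
  rw [rank_eq_finrank_span_cols, rank_eq_finrank_span_row]
  refine Submodule.finrank_mono (Submodule.span_le.mpr ?_)
  rintro _ ⟨j, rfl⟩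
  have hj : B j ∈ Submodule.span K (Set.range (B.row ∘ a)) :=
    ha ▸ Submodule.subset_span ⟨j, rfl⟩
  have := Submodule.apply_mem_span_image_of_mem_span (LinearMap.funLeft K K a) hj
  rw [← Set.range_comp] at this
  have hcol : (B.submatrix a id).col j = -LinearMap.funLeft K K a (B j) := by
    ext x
    simp only [col_apply, submatrix_apply, id, Pi.neg_apply, LinearMap.funLeft_apply]
    rw [← neg_apply .., ← hB, transpose_apply]
  rw [hcol]
  exact Submodule.neg_mem _ this

theorem even_rank_of_transpose_eq_neg [NeZero (2 : K)] {B : Matrix m m K} (hB : Bᵀ = -B) :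
    Even B.rank := by
  classical
  -- Rows `a` forming a basis of the row space index a nonsingular principal submatrix `C`;
  -- a skew-symmetric matrix of odd size is singular.
  obtain ⟨κ, a, ha, hspan, hli⟩ := exists_linearIndependent' K B.row
  have : Finite κ := Finite.of_injective a ha
  cases nonempty_fintype κ
  set C := B.submatrix a a
  have hrank : B.rank = Fintype.card κ := by
    rw [rank_eq_finrank_span_row, ← hspan, finrank_span_eq_card hli]
  have hCrank : C.rank = Fintype.card κ := le_antisymm (rank_le_card_height C)
    ((LinearIndependent.rank_matrix hli).symm.trans_le
      (rank_submatrix_le_rank_submatrix_of_transpose_eq_neg hB hspan))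
  have hCunit : IsUnit C.det := (isUnit_iff_isUnit_det C).mp <|
    linearIndependent_rows_iff_isUnit.mp <| linearIndependent_iff_card_eq_finrank_span.mpr <|
      by rw [Set.finrank, ← rank_eq_finrank_span_row, hCrank]
  rw [hrank, ← Nat.not_odd_iff_even]
  intro hodd
  have hdet : C.det = -C.det := by
    conv_lhs => rw [← det_transpose, transpose_submatrix, hB]
    rw [show (-B).submatrix a a = -C from rfl, det_neg, hodd.neg_one_pow, neg_one_mul]
  have h2 : (2 : K) * C.det = 0 := by linear_combination hdet
  exact hCunit.ne_zero ((mul_eq_zero.mp h2).resolve_left two_ne_zero)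

theorem transpose_pow_mul_eq_neg {R : Type*} [CommRing R] [DecidableEq m] {N A : Matrix m m R}
    (hA : A.IsSymm) (hNA : N * A + A * Nᵀ = 0) {j : ℕ} (hj : Odd j) :
    (N ^ j * A)ᵀ = -(N ^ j * A) := by
  have h : SemiconjBy A (-Nᵀ) N := by
    rw [SemiconjBy, mul_neg, eq_neg_of_add_eq_zero_left hNA]
  rw [transpose_mul, hA.eq, transpose_pow, ← (h.pow_right j).eq, hj.neg_pow, mul_neg, neg_neg]

theorem rank_pow_sub_rank_pow_mul_lt [NeZero (2 : K)] [DecidableEq m] {N A : Matrix m m K}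
    (hA : A.IsSymm) (hNA : N * A + A * Nᵀ = 0) {t : ℕ} (ht : Odd t)
    (hodd : Odd ((N ^ t).rank - (N ^ (t + 2)).rank)) :
    (N ^ (t + 2)).rank - (N ^ (t + 2) * A).rank < (N ^ t).rank - (N ^ t * A).rank := by
  have hle := antitone_rank_pow_sub_rank_pow_mul N A (Nat.le_add_right t 2)
  obtain ⟨a, ha⟩ := even_rank_of_transpose_eq_neg (transpose_pow_mul_eq_neg hA hNA ht)
  obtain ⟨b, hb⟩ := even_rank_of_transpose_eq_neg
    (transpose_pow_mul_eq_neg hA hNA (ht.add_even even_two))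
  obtain ⟨c, hc⟩ := hodd
  have := rank_mul_le_left (N ^ t) A
  have := rank_mul_le_left (N ^ (t + 2)) A
  have : (N ^ (t + 2)).rank ≤ (N ^ t).rank := by rw [pow_add]; exact rank_mul_le_left _ _
  dsimp only at hle
  omega

theorem rank_eq_card_of_row_eq_single [DecidableEq n] (M : Matrix m n K) {p : m → Prop}
    [DecidablePred p] (σ : Subtype p → n) (hσ : Function.Injective σ) (hzero : ∀ i, ¬ p i → M i = 0)
    (hsingle : ∀ i : Subtype p, M i = Pi.single (σ i) 1) :
    M.rank = Fintype.card (Subtype p) := by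
  have hli : LinearIndependent K fun i : Subtype p => (Pi.single (σ i) 1 : n → K) := by
    simpa only [Function.comp_def, Pi.basisFun_apply] using
      (Pi.basisFun K n).linearIndependent.comp σ hσ
  have hspan : Submodule.span K (Set.range M.row) =
      Submodule.span K (Set.range fun i : Subtype p => (Pi.single (σ i) 1 : n → K)) := by
    refine le_antisymm (Submodule.span_le.mpr ?_) (Submodule.span_mono ?_)
    · rintro _ ⟨i, rfl⟩
      by_cases hi : p i
      · exact Submodule.subset_span ⟨⟨i, hi⟩, (hsingle ⟨i, hi⟩).symm⟩
      · exact (show M.row i = 0 from hzero i hi) ▸ Submodule.zero_mem _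
    · rintro _ ⟨i, rfl⟩
      exact ⟨i, hsingle i⟩
  rw [rank_eq_finrank_span_row, hspan, finrank_span_eq_card hli]

end Matrix

open Finset

theorem Finset.card_le_apply_zero_of_antitone {f : ℕ → ℕ} (hf : Antitone f) {S : Finset ℕ}
    (hS : ∀ a ∈ S, ∀ b ∈ S, a < b → a + 2 ≤ b) (hdrop : ∀ a ∈ S, f (a + 2) < f a) :
    S.card ≤ f 0 := by
  have hinj : Set.InjOn f S := by
    intro a ha b hb hab
    by_contra hne
    rcases Nat.lt_or_gt_of_ne hne with h | h
    · have := hf (hS a ha b hb h); have := hdrop a ha; omega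
    · have := hf (hS b hb a ha h); have := hdrop b hb; omega
  calc S.card ≤ (Icc 1 (f 0)).card := card_le_card_of_injOn f
        (fun a ha => mem_Icc.mpr ⟨by have := hdrop a ha; omega, hf (Nat.zero_le a)⟩) hinj
    _ = f 0 := by simp

section Blocks

variable {n k : ℕ} (lam : Fin k → ℕ)

theorem psum_add_le_psum {r r' : Fin k} (h : r < r') : psum lam r + lam r ≤ psum lam r' := by
  rw [psum, psum, add_comm, ← sum_insert (by simp)]
  refine sum_le_sum_of_subset fun t ht => ?_
  simp only [mem_insert, mem_filter, mem_univ, true_and] at ht ⊢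
  exact ht.elim (· ▸ h) (·.trans h)

theorem psum_add_le (hn : ∑ r, lam r = n) (r : Fin k) : psum lam r + lam r ≤ n := by
  rw [← hn, psum, add_comm, ← sum_insert (by simp)]
  exact sum_le_sum_of_subset (subset_univ _)

theorem eq_of_mem_block {x : ℕ} {r r' : Fin k} (h : psum lam r ≤ x ∧ x < psum lam r + lam r)
    (h' : psum lam r' ≤ x ∧ x < psum lam r' + lam r') : r = r' := by
  rcases lt_trichotomy r r' with hr | hr | hr
  · have := psum_add_le_psum lam hr; omega
  · exact hr
  · have := psum_add_le_psum lam hr; omega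

/-- For `a ≤ b`: the positions `a` and `b` (0-indexed) lie in one block of `λ`. -/
def SameBlock (a b : ℕ) : Prop :=
  ∃ r, psum lam r ≤ a ∧ b < psum lam r + lam r

instance : DecidableRel (SameBlock lam) := fun _ _ => by unfold SameBlock; infer_instance

variable {lam}

theorem SameBlock.trans {a b c : ℕ} (hab : SameBlock lam a b) (hbc : SameBlock lam b c)
    (hab' : a ≤ b) (hbc' : b ≤ c) : SameBlock lam a c := by
  obtain ⟨r, h₁, h₂⟩ := hab
  obtain ⟨r', h₁', h₂'⟩ := hbc
  obtain rfl := eq_of_mem_block lam (x := b) ⟨by omega, h₂⟩ ⟨h₁', by omega⟩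
  exact ⟨r, h₁, h₂'⟩

theorem SameBlock.lt (hn : ∑ r, lam r = n) {a b : ℕ} (h : SameBlock lam a b) : b < n := by
  obtain ⟨r, -, h⟩ := h
  have := psum_add_le lam hn r
  omega

theorem card_sameBlock (hn : ∑ r, lam r = n) (j : ℕ) :
    Fintype.card {i : Fin n // SameBlock lam i (i + j)} = ∑ r, (lam r - j) := by
  let e : (Σ r, Fin (lam r - j)) → {i : Fin n // SameBlock lam i (i + j)} := fun x =>
    ⟨blockIdx lam hn x.1 x.2 (by omega), x.1, Nat.le_add_right _ _, by simp only [blockIdx]; omega⟩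
  have he : e.Bijective := by
    constructor
    · rintro ⟨r, p⟩ ⟨r', p'⟩ h
      have hv : psum lam r + p = psum lam r' + p' := congrArg (fun x => (x.1 : ℕ)) h
      obtain rfl := eq_of_mem_block lam (x := psum lam r + p) (r := r) (r' := r')
        ⟨by omega, by omega⟩ ⟨by omega, by omega⟩
      simp only [Sigma.mk.injEq, heq_eq_eq, true_and]
      exact Fin.ext (by omega)
    · rintro ⟨i, r, h₁, h₂⟩
      exact ⟨⟨r, i - psum lam r, by omega⟩, Subtype.ext (Fin.ext (by simp [e, blockIdx]; omega))⟩
  rw [← Fintype.card_congr (Equiv.ofBijective e he)]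
  simp

theorem sum_tsub_eq_sum_tsub_add_two (t : ℕ) :
    ∑ r, (lam r - t) =
      ∑ r, (lam r - (t + 2)) + 2 * #{r | t + 1 < lam r} + #{r | lam r = t + 1} := by
  simp only [card_filter, mul_sum, ← sum_add_distrib]
  refine sum_congr rfl fun r _ => ?_
  split_ifs <;> omega

theorem exists_finset_card_eq_degeneracy (hpos : ∀ r, 1 ≤ lam r) :
    ∃ S : Finset ℕ, S.card = degeneracy lam ∧ ∀ t ∈ S, Odd t ∧ Odd #{r | lam r = t + 1} := by
  refine ⟨((univ.image lam).filter fun m => Even m ∧ Odd #{r | lam r = m}).image (· - 1),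
    card_image_of_injOn ?_, ?_⟩
  · intro a ha b hb hab
    simp only [coe_filter, mem_image, mem_univ, true_and] at ha hb
    obtain ⟨⟨r, rfl⟩, -⟩ := ha
    obtain ⟨⟨r', rfl⟩, -⟩ := hb
    have := hpos r; have := hpos r'
    simp only at hab; omega
  · intro t ht
    simp only [mem_image, mem_filter, mem_univ, true_and] at ht
    obtain ⟨m, ⟨⟨r, rfl⟩, heven, hodd⟩, rfl⟩ := ht
    have := hpos r
    rw [Nat.sub_add_cancel this]
    exact ⟨Nat.Even.sub_odd this heven odd_one, hodd⟩

end Blocks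

section JordanNilpotent

variable (K : Type*) [Field K] {n k : ℕ} {lam : Fin k → ℕ}

def blockShift (n : ℕ) (lam : Fin k → ℕ) (j : ℕ) : Matrix (Fin n) (Fin n) K :=
  Matrix.of fun i c => if (c : ℕ) = i + j ∧ SameBlock lam i c then 1 else 0

theorem jordanNilpotent_eq_blockShift_one : jordanNilpotent K n k lam = blockShift K n lam 1 := by
  ext i c
  refine if_congr ?_ rfl rfl
  exact ⟨fun ⟨hc, r, h₁, h₂⟩ => ⟨hc, r, h₁, by omega⟩, fun ⟨hc, r, h₁, h₂⟩ => ⟨hc, r, h₁, by omega⟩⟩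

theorem blockShift_mul_blockShift_one (j : ℕ) :
    blockShift K n lam j * blockShift K n lam 1 = blockShift K n lam (j + 1) := by
  ext i c
  simp only [blockShift, Matrix.mul_apply, Matrix.of_apply, ite_zero_mul_ite_zero, mul_one]
  by_cases hij : (i : ℕ) + j < n
  · rw [sum_eq_single ⟨i + j, hij⟩ (fun l _ hl => if_neg fun h => hl (Fin.ext h.1.1))
      (by simp)]
    have hv : ((⟨i + j, hij⟩ : Fin n) : ℕ) = i + j := rfl
    refine if_congr ⟨fun ⟨⟨_, h₁⟩, hc, h₂⟩ => ⟨by omega, h₁.trans h₂ (by simp) (by omega)⟩,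
      fun ⟨hc, ⟨r, h₁, h₂⟩⟩ => ⟨⟨rfl, r, h₁, by omega⟩, by omega, r, by omega, h₂⟩⟩ rfl rfl
  · have hc : ¬((c : ℕ) = i + (j + 1) ∧ SameBlock lam i c) := fun h => by omega
    rw [if_neg hc]
    exact sum_eq_zero fun l _ => if_neg (by rintro ⟨⟨h, -⟩, -⟩; exact hij (h ▸ l.2))

theorem jordanNilpotent_pow_succ (j : ℕ) :
    jordanNilpotent K n k lam ^ (j + 1) = blockShift K n lam (j + 1) := by
  induction j with
  | zero => rw [zero_add, pow_one, jordanNilpotent_eq_blockShift_one]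
  | succ j ih =>
    rw [pow_succ, ih, jordanNilpotent_eq_blockShift_one, blockShift_mul_blockShift_one]

theorem rank_blockShift (hn : ∑ r, lam r = n) (j : ℕ) :
    (blockShift K n lam j).rank = ∑ r, (lam r - j) := by
  rw [← card_sameBlock hn j]
  refine Matrix.rank_eq_card_of_row_eq_single _ (fun i => ⟨i + j, i.2.lt hn⟩)
    (fun a b h => Subtype.ext (Fin.ext (by simpa using congrArg Fin.val h))) (fun i hi => ?_)
    (fun i => ?_)
  · ext c
    simp only [blockShift, Matrix.of_apply, Pi.zero_apply]
    exact if_neg (by rintro ⟨h, h'⟩; exact hi (h ▸ h'))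
  · ext c
    simp only [blockShift, Matrix.of_apply, Pi.single_apply, Fin.ext_iff]
    exact if_congr ⟨fun h => h.1, fun h => ⟨h, h ▸ i.2⟩⟩ rfl rfl

theorem rank_jordanNilpotent_pow (hn : ∑ r, lam r = n) (j : ℕ) :
    (jordanNilpotent K n k lam ^ j).rank = ∑ r, (lam r - j) := by
  cases j with
  | zero => simp [hn]
  | succ j => rw [jordanNilpotent_pow_succ, rank_blockShift K hn]

theorem odd_rank_jordanNilpotent_pow_sub (hn : ∑ r, lam r = n) {t : ℕ}
    (ht : Odd #{r | lam r = t + 1}) :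
    Odd ((jordanNilpotent K n k lam ^ t).rank - (jordanNilpotent K n k lam ^ (t + 2)).rank) := by
  rw [rank_jordanNilpotent_pow K hn, rank_jordanNilpotent_pow K hn, sum_tsub_eq_sum_tsub_add_two,
    add_assoc, Nat.add_sub_cancel_left]
  exact (even_two_mul _).add_odd ht

end JordanNilpotent

theorem jordan_fixed_rank_le_general (K : Type*) [Field K] [CharZero K] (n k : ℕ)
    (lam : Fin k → ℕ) (hpos : ∀ r, 1 ≤ lam r)
    (hn : ∑ r, lam r = n) (A : Matrix (Fin n) (Fin n) K) (hA : A.IsSymm)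
    (hfix : jordanNilpotent K n k lam * A + A * (jordanNilpotent K n k lam)ᵀ = 0) :
    A.rank ≤ n - degeneracy lam := by
  obtain ⟨S, hcard, hS⟩ := exists_finset_card_eq_degeneracy hpos
  have hspaced : ∀ a ∈ S, ∀ b ∈ S, a < b → a + 2 ≤ b := fun a ha b hb hab => by
    obtain ⟨⟨x, rfl⟩, -⟩ := hS a ha
    obtain ⟨⟨y, rfl⟩, -⟩ := hS b hb
    omega
  have hle := S.card_le_apply_zero_of_antitone (antitone_rank_pow_sub_rank_pow_mul _ A) hspaced
    fun t ht => rank_pow_sub_rank_pow_mul_lt hA hfix (hS t ht).1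
      (odd_rank_jordanNilpotent_pow_sub K hn (hS t ht).2)
  simp only [pow_zero, one_mul, rank_one, Fintype.card_fin] at hle
  have := A.rank_le_width
  omega

/-- Every symmetric matrix `A` with `N_λ * A + A * N_λᵀ = 0` has rank at most `n - d(λ)`. -/
theorem jordan_fixed_rank_le (K : Type*) [Field K] [CharZero K] (n k : ℕ)
    (lam : Fin k → ℕ) (hpos : ∀ r, 1 ≤ lam r) (hmono : Antitone lam)
    (hn : ∑ r, lam r = n) (A : Matrix (Fin n) (Fin n) K) (hA : A.IsSymm)
    (hfix : jordanNilpotent K n k lam * A + A * (jordanNilpotent K n k lam)ᵀ = 0) :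
    A.rank ≤ n - degeneracy lam :=
  jordan_fixed_rank_le_general K n k lam hpos hn A hA hfix
end
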